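/- Let G be a finite group and K a zero-sum-free semifield. Every indecomposable representation of G over K has dimension dividing the order of G. -/

import Mathlib

/-!
Over a zero-sum-free semifield every invertible matrix is monomial: an off-diagonal entry of
`A * A⁻¹ = 1` is a sum of products that must all vanish. So every `ρ g` carries each coordinate
line to a coordinate line, which makes `G` act on the indices. The coordinate subspaces spanned by
a `G`-stable set of indices and by its complement are invariant and complementary, so for an
indecomposable representation the action is transitive, and orbit–stabilizer gives `n ∣ |G|`.
-/

def ZeroSumFree (M : Type*) [Add M] [Zero M] : Prop :=
  ∀ a b : M, a + b = 0 → a = 0 ∧ b = 0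

theorem ZeroSumFree.sum_eq_zero_iff {M ι : Type*} [AddCommMonoid M] (hM : ZeroSumFree M)
    {s : Finset ι} {f : ι → M} : ∑ i ∈ s, f i = 0 ↔ ∀ i ∈ s, f i = 0 := by
  classical
  refine ⟨fun h => ?_, Finset.sum_eq_zero⟩
  induction s using Finset.induction_on with
  | empty => simp
  | insert a s ha ih =>
    rw [Finset.sum_insert ha] at h
    obtain ⟨ha0, hs0⟩ := hM _ _ h
    rw [Finset.forall_mem_insert]
    exact ⟨ha0, ih hs0⟩

theorem Matrix.existsUnique_ne_zero_of_mul_eq_one {R ι : Type*} [Semiring R] [NoZeroDivisors R]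
    [Nontrivial R] [Fintype ι] [DecidableEq ι] (hR : ZeroSumFree R) {A B : Matrix ι ι R}
    (hAB : A * B = 1) (hBA : B * A = 1) (k : ι) : ∃! i, A i k ≠ 0 := by
  obtain ⟨i, -, hi⟩ : ∃ i ∈ Finset.univ, B k i * A i k ≠ 0 := by
    refine Finset.exists_ne_zero_of_sum_ne_zero ?_
    rw [← Matrix.mul_apply, hBA, Matrix.one_apply_eq]
    exact one_ne_zero
  refine ⟨i, right_ne_zero_of_mul hi, fun j hj => ?_⟩
  by_contra hji
  have hABji : (A * B) j i = 0 := by rw [hAB, Matrix.one_apply_ne hji]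
  rw [Matrix.mul_apply, hR.sum_eq_zero_iff] at hABji
  exact mul_ne_zero hj (left_ne_zero_of_mul hi) (hABji k (Finset.mem_univ k))

section supportedOn

variable {R ι : Type*} [Semiring R] {S : Set ι}

variable (R) in
def supportedOn (S : Set ι) : Submodule R (ι → R) :=
  Submodule.pi Sᶜ fun _ => ⊥

theorem mem_supportedOn {x : ι → R} : x ∈ supportedOn R S ↔ ∀ i ∉ S, x i = 0 := by
  simp [supportedOn, Submodule.mem_pi]

theorem supportedOn_ne_bot [Nontrivial R] (hS : S.Nonempty) : supportedOn R S ≠ ⊥ := by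
  classical
  obtain ⟨k, hk⟩ := hS
  refine (Submodule.ne_bot_iff _).mpr ⟨Pi.single k 1, ?_, by simp⟩
  exact mem_supportedOn.mpr fun i hi => Pi.single_eq_of_ne (by rintro rfl; exact hi hk) _

variable (S) in
theorem existsUnique_add_supportedOn_compl (z : ι → R) :
    ∃! w : supportedOn R S × supportedOn R Sᶜ, (w.1 : ι → R) + w.2 = z := by
  classical
  refine ⟨(⟨S.indicator z, mem_supportedOn.mpr fun i hi => Set.indicator_of_notMem hi z⟩,
    ⟨Sᶜ.indicator z, mem_supportedOn.mpr fun i hi => Set.indicator_of_notMem hi z⟩),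
    Set.indicator_self_add_compl S z, ?_⟩
  rintro ⟨⟨u, hu⟩, ⟨v, hv⟩⟩ rfl
  rw [mem_supportedOn] at hu hv
  ext i <;> by_cases hi : i ∈ S <;> simp [hi, hu, hv]

end supportedOn

namespace Representation

variable {R G ι : Type*} [CommSemiring R] [DecidableEq ι]

def IsMonomial [Monoid G] (ρ : Representation R G (ι → R)) : Prop :=
  ∀ g k, ∃! i, ρ g (Pi.single k 1) i ≠ 0

def IsDecomposable [Monoid G] (ρ : Representation R G (ι → R)) : Prop :=
  ∃ p q : Submodule R (ι → R),
    (∀ g : G, ∀ y ∈ p, ρ g y ∈ p) ∧ (∀ g : G, ∀ y ∈ q, ρ g y ∈ q) ∧ p ≠ ⊥ ∧ q ≠ ⊥ ∧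
    ∀ z : ι → R, ∃! w : p × q, (w.1 : ι → R) + (w.2 : ι → R) = z

theorem isMonomial_of_zeroSumFree [NoZeroDivisors R] [Nontrivial R] [Group G] [Fintype ι]
    (hR : ZeroSumFree R) (ρ : Representation R G (ι → R)) : ρ.IsMonomial := fun g k =>
  Matrix.existsUnique_ne_zero_of_mul_eq_one hR (A := LinearMap.toMatrixAlgEquiv' (ρ g))
    (B := LinearMap.toMatrixAlgEquiv' (ρ g⁻¹))
    (by rw [← map_mul, ← map_mul, mul_inv_cancel, map_one, map_one])
    (by rw [← map_mul, ← map_mul, inv_mul_cancel, map_one, map_one]) k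

namespace IsMonomial

variable [Monoid G] {ρ : Representation R G (ι → R)} (hρ : ρ.IsMonomial)

noncomputable def smul (g : G) (k : ι) : ι :=
  (hρ g k).exists.choose

theorem apply_single_ne_zero_iff {g : G} {k i : ι} :
    ρ g (Pi.single k 1) i ≠ 0 ↔ i = hρ.smul g k :=
  ⟨fun h => (hρ g k).unique h (hρ g k).exists.choose_spec,
    fun h => h ▸ (hρ g k).exists.choose_spec⟩

theorem apply_single (g : G) (k : ι) :
    ρ g (Pi.single k 1) = Pi.single (hρ.smul g k) (ρ g (Pi.single k 1) (hρ.smul g k)) := by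
  ext i
  by_cases hi : i = hρ.smul g k
  · subst hi
    simp
  · rw [Pi.single_eq_of_ne hi]
    exact not_not.mp (mt hρ.apply_single_ne_zero_iff.mp hi)

theorem smul_one [Nontrivial R] (k : ι) : hρ.smul 1 k = k :=
  (hρ.apply_single_ne_zero_iff.mp (by simp)).symm

theorem smul_mul [NoZeroDivisors R] (g h : G) (k : ι) :
    hρ.smul (g * h) k = hρ.smul g (hρ.smul h k) := by
  refine (hρ.apply_single_ne_zero_iff.mp ?_).symm
  rw [map_mul, Module.End.mul_apply, hρ.apply_single h k, ← mul_one (ρ h _ _), ← smul_eq_mul,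
    Pi.single_smul', map_smul, Pi.smul_apply, smul_eq_mul]
  exact mul_ne_zero (hρ.apply_single_ne_zero_iff.mpr rfl) (hρ.apply_single_ne_zero_iff.mpr rfl)

noncomputable abbrev mulAction [NoZeroDivisors R] [Nontrivial R] : MulAction G ι where
  smul := hρ.smul
  one_smul := hρ.smul_one
  mul_smul := hρ.smul_mul

end IsMonomial

section lines

variable [Group G] [Fintype ι] {ρ : Representation R G (ι → R)}

theorem apply_apply_eq_sum (g : G) (x : ι → R) (i : ι) :
    ρ g x i = ∑ k, ρ g (Pi.single k 1) i * x k := by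
  conv_lhs => rw [← Matrix.toLinAlgEquiv'_toMatrixAlgEquiv' (ρ g)]
  rfl

variable [MulAction G ι]

theorem apply_mem_supportedOn (hρ : ∀ (g : G) (k i : ι), ρ g (Pi.single k 1) i ≠ 0 → i = g • k)
    {S : Set ι} (hS : ∀ g : G, ∀ k ∈ S, g • k ∈ S) (g : G) {x : ι → R}
    (hx : x ∈ supportedOn R S) : ρ g x ∈ supportedOn R S := by
  rw [mem_supportedOn] at hx ⊢
  intro i hi
  rw [apply_apply_eq_sum]
  refine Finset.sum_eq_zero fun k _ => ?_
  by_cases hk : k ∈ S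
  · rw [not_not.mp (mt (hρ g k i) (by rintro rfl; exact hi (hS g k hk))), zero_mul]
  · rw [hx k hk, mul_zero]

variable [Nontrivial R]

theorem isDecomposable_of_stable
    (hρ : ∀ (g : G) (k i : ι), ρ g (Pi.single k 1) i ≠ 0 → i = g • k)
    {S : Set ι} (hS : ∀ g : G, ∀ k ∈ S, g • k ∈ S) (hS₀ : S.Nonempty) (hS₁ : Sᶜ.Nonempty) :
    ρ.IsDecomposable := by
  have hSc : ∀ g : G, ∀ k ∈ Sᶜ, g • k ∈ Sᶜ := fun g k hk hgk =>
    hk (inv_smul_smul g k ▸ hS g⁻¹ _ hgk)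
  exact ⟨supportedOn R S, supportedOn R Sᶜ, apply_mem_supportedOn hρ hS,
    apply_mem_supportedOn hρ hSc, supportedOn_ne_bot hS₀, supportedOn_ne_bot hS₁,
    existsUnique_add_supportedOn_compl S⟩

theorem isPretransitive_of_not_isDecomposable
    (hρ : ∀ (g : G) (k i : ι), ρ g (Pi.single k 1) i ≠ 0 → i = g • k)
    (h : ¬ ρ.IsDecomposable) : MulAction.IsPretransitive G ι := by
  refine ⟨fun k₀ k₁ => ?_⟩
  by_contra hk₁
  refine h (isDecomposable_of_stable hρ (S := MulAction.orbit G k₀) ?_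
    ⟨k₀, MulAction.mem_orbit_self k₀⟩ ⟨k₁, fun ⟨g, hg⟩ => hk₁ ⟨g, hg⟩⟩)
  rintro g _ ⟨h, rfl⟩
  exact ⟨g * h, mul_smul g h k₀⟩

end lines

end Representation

/-- Every indecomposable representation `V = K^n` of a finite group `G` over
a zero-sum-free semifield `K` (indecomposable: nonzero, and not an internal
direct sum of two nonzero invariant submodules) has dimension dividing the
order of `G`. -/
theorem indecomposable_dimension_dvd_card
    (K G : Type*) [Semifield K] [Group G] [Fintype G]
    (hzsf : ∀ a b : K, a + b = 0 → a = 0 ∧ b = 0)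
    (n : ℕ) (ρ : Representation K G (Fin n → K))
    (hindec : (∃ x : Fin n → K, x ≠ 0) ∧
      ¬ ∃ p q : Submodule K (Fin n → K),
        (∀ g : G, ∀ y ∈ p, ρ g y ∈ p) ∧ (∀ g : G, ∀ y ∈ q, ρ g y ∈ q) ∧
        p ≠ ⊥ ∧ q ≠ ⊥ ∧
        ∀ z : Fin n → K, ∃! w : p × q, (w.1 : Fin n → K) + (w.2 : Fin n → K) = z) :
    n ∣ Fintype.card G := by
  obtain ⟨⟨x, hx⟩, hindec⟩ := hindec
  have hρ := ρ.isMonomial_of_zeroSumFree hzsf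
  let := hρ.mulAction
  have := Representation.isPretransitive_of_not_isDecomposable
    (fun _ _ _ => hρ.apply_single_ne_zero_iff.mp) hindec
  obtain ⟨k⟩ : Nonempty (Fin n) := not_isEmpty_iff.mp fun _ => hx (Subsingleton.elim _ _)
  have hindex := MulAction.index_stabilizer_of_transitive G k
  rw [Nat.card_eq_fintype_card, Fintype.card_fin] at hindex
  rw [← hindex, ← Nat.card_eq_fintype_card]
  exact Subgroup.index_dvd_card _
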